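/- arXiv:1506.06926 — 2 statements merged into one kernel-verified Lean document; each statement's English description precedes it below -/
import Mathlib

section
/- Let f : ℝ² → ℝ be a smooth function and N > 0. Suppose there are functions a_0, ..., a_N : ℝ → ℝ with a_N not identically zero on an open interval I, such that for all (x,y) in I × J (J an open interval), ∑_{n=0}^N a_n(x) · f(x,y)^n = 0. Then ∂f/∂y = 0 on I × J, i.e., f depends only on x. -/
/-- A finite preconnected set in ℝ is a subsingleton. -/
lemma finite_preconnected_subsingleton {S : Set ℝ} (hfin : S.Finite)
    (hconn : IsPreconnected S) : S.Subsingleton := by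
  intro y₁ h₁ y₂ h₂
  by_contra hne
  rcases lt_or_gt_of_ne hne with h | h
  · exact Set.Icc_infinite h (hfin.subset (hconn.ordConnected.out h₁ h₂))
  · exact Set.Icc_infinite h (hfin.subset (hconn.ordConnected.out h₂ h₁))

/-- A polynomial relation `∑ aₙ(x) f(x,y)ⁿ = 0` on a rectangle `I × J`, with
coefficients depending on `x` only and leading coefficient nonvanishing on `I`,
forces `f` to be independent of `y`. -/
theorem stmt0 (f : ℝ × ℝ → ℝ) (hf : ContDiff ℝ (⊤ : ℕ∞) f) (N : ℕ) (hN : 0 < N)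
    (a : ℕ → ℝ → ℝ) (p q r s : ℝ) (hpq : p < q) (hrs : r < s)
    (haN : ∀ x ∈ Set.Ioo p q, a N x ≠ 0)
    (hrel : ∀ x ∈ Set.Ioo p q, ∀ y ∈ Set.Ioo r s,
      ∑ n ∈ Finset.range (N + 1), a n x * (f (x, y)) ^ n = 0) :
    ∀ x ∈ Set.Ioo p q, ∀ y ∈ Set.Ioo r s, deriv (fun t => f (x, t)) y = 0 := by
  intro x hx y hy
  set g : ℝ → ℝ := fun t => f (x, t) with hg
  have hgc : Continuous g := hf.continuous.comp (continuous_const.prodMk continuous_id)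
  -- the polynomial
  set P : Polynomial ℝ := ∑ n ∈ Finset.range (N + 1), Polynomial.C (a n x) * Polynomial.X ^ n
    with hP
  have hPeval : ∀ t, P.eval t = ∑ n ∈ Finset.range (N + 1), a n x * t ^ n := by
    intro t
    simp [hP, Polynomial.eval_finset_sum]
  have hPne : P ≠ 0 := by
    intro h0
    have : P.coeff N = a N x := by
      rw [hP, Polynomial.finset_sum_coeff]
      rw [Finset.sum_eq_single N]
      · simp
      · intro b hb hbne
        simp [Polynomial.coeff_X_pow, hbne, Ne.symm hbne]
      · intro h; exact absurd (Finset.self_mem_range_succ N) h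
    rw [h0] at this
    exact haN x hx (by simpa using this.symm)
  have hroots : (setOf P.IsRoot).Finite := Polynomial.finite_setOf_isRoot hPne
  have hmaps : Set.MapsTo g (Set.Ioo r s) (setOf P.IsRoot) := by
    intro t ht
    show P.eval (g t) = 0; rw [hPeval]
    exact hrel x hx t ht
  have hconn : IsPreconnected (g '' Set.Ioo r s) :=
    (isPreconnected_Ioo).image g hgc.continuousOn
  have hsub : (g '' Set.Ioo r s).Subsingleton :=
    finite_preconnected_subsingleton (hroots.subset (Set.image_subset_iff.mpr hmaps))
      hconn
  -- g is locally constant near y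
  have hconst : ∀ t ∈ Set.Ioo r s, g t = g y :=
    fun t ht => hsub (Set.mem_image_of_mem g ht) (Set.mem_image_of_mem g hy)
  have heq : g =ᶠ[nhds y] fun _ => g y := by
    filter_upwards [Ioo_mem_nhds hy.1 hy.2] with t ht using hconst t ht
  rw [heq.deriv_eq]
  exact deriv_const y (g y)
end

section
/- Define U(x,y) = (1/2)·ln(2y + c + √(4x² + 4y² + 4cy + c²)) − ln x + c₂ on the domain x > 0 where 4x² + (2y+c)² > 0. Then U satisfies the Ernst equation U_x + x·U_{yy} + x·U_{xx} = 0. -/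
/-! With `w = 2y + c` and `s = √(4x² + w²)` one finds `U_y = 1/s`, `U_yy = -2w/s³`,
`U_x = -(s + w)/(2xs)` (this uses `(s - w)(s + w) = 4x²`) and
`U_xx = (s³ + w(s² + 4x²))/(2x²s³)`. Over the common denominator `2xs³` the Ernst combination
`U_x + x U_yy + x U_xx` then cancels identically. -/

/-- The potential `U(x,y) = ½ ln(2y + c + √(4x² + 4y² + 4cy + c²)) - ln x + c₂`. -/
noncomputable def UZ (c c2 x y : ℝ) : ℝ :=
  (1 / 2) * Real.log (2 * y + c + Real.sqrt (4 * x ^ 2 + 4 * y ^ 2 + 4 * c * y + c ^ 2))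
    - Real.log x + c2

open Real

/-- Twice the distance from `(x, y)` to `(0, -c/2)`. -/
noncomputable def twiceDist (c x y : ℝ) : ℝ := √(4 * x ^ 2 + (2 * y + c) ^ 2)

section

variable {c x y : ℝ}

lemma twiceDist_sq (c x y : ℝ) : twiceDist c x y ^ 2 = 4 * x ^ 2 + (2 * y + c) ^ 2 :=
  sq_sqrt (by positivity)

lemma twiceDist_pos (hx : x ≠ 0) : 0 < twiceDist c x y :=
  sqrt_pos.2 (by positivity)

lemma add_twiceDist_pos (hx : x ≠ 0) : 0 < 2 * y + c + twiceDist c x y := by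
  have : |2 * y + c| < twiceDist c x y := by
    rw [← sqrt_sq_eq_abs]
    exact sqrt_lt_sqrt (sq_nonneg _) (lt_add_of_pos_left _ (by positivity))
  linarith [neg_abs_le (2 * y + c)]

lemma UZ_eq (c c2 x y : ℝ) :
    UZ c c2 x y = 1 / 2 * log (2 * y + c + twiceDist c x y) - log x + c2 := by
  unfold UZ twiceDist; ring_nf

lemma hasDerivAt_twiceDist_x (hx : x ≠ 0) :
    HasDerivAt (fun x' => twiceDist c x' y) (4 * x / twiceDist c x y) x := by
  have h : HasDerivAt (fun x' => 4 * x' ^ 2 + (2 * y + c) ^ 2) (4 * (2 * x)) x := by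
    simpa using ((hasDerivAt_pow 2 x).const_mul 4).add_const ((2 * y + c) ^ 2)
  unfold twiceDist
  exact (h.sqrt (by positivity)).congr_deriv (by field_simp)

lemma hasDerivAt_twiceDist_y (hx : x ≠ 0) :
    HasDerivAt (fun y' => twiceDist c x y') (2 * (2 * y + c) / twiceDist c x y) y := by
  have h : HasDerivAt (fun y' => 4 * x ^ 2 + (2 * y' + c) ^ 2) (2 * (2 * y + c) * 2) y := by
    simpa using (((hasDerivAt_id' y).const_mul 2).add_const c).pow 2 |>.const_add (4 * x ^ 2)
  unfold twiceDist
  exact (h.sqrt (by positivity)).congr_deriv (by field_simp)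

lemma hasDerivAt_UZ_y (c2 : ℝ) (hx : x ≠ 0) :
    HasDerivAt (fun y' => UZ c c2 x y') (twiceDist c x y)⁻¹ y := by
  simp only [UZ_eq]
  have h : HasDerivAt (fun y' => 2 * y' + c + twiceDist c x y')
      (2 * 1 + 2 * (2 * y + c) / twiceDist c x y) y :=
    (((hasDerivAt_id' y).const_mul 2).add_const c).add (hasDerivAt_twiceDist_y hx)
  refine (((h.log (add_twiceDist_pos hx).ne').const_mul (1 / 2)).sub_const (log x)
    |>.add_const c2).congr_deriv ?_
  have := twiceDist_pos (c := c) (y := y) hx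
  have := add_twiceDist_pos (c := c) (y := y) hx
  field_simp
  ring

lemma hasDerivAt_UZ_x (c2 : ℝ) (hx : x ≠ 0) :
    HasDerivAt (fun x' => UZ c c2 x' y)
      (-(twiceDist c x y + (2 * y + c)) / (2 * x * twiceDist c x y)) x := by
  simp only [UZ_eq]
  have h := (hasDerivAt_twiceDist_x (c := c) (y := y) hx).const_add (2 * y + c)
  refine (((h.log (add_twiceDist_pos hx).ne').const_mul (1 / 2)).sub (hasDerivAt_log hx)
    |>.add_const c2).congr_deriv ?_
  have := twiceDist_pos (c := c) (y := y) hx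
  have := add_twiceDist_pos (c := c) (y := y) hx
  field_simp
  linear_combination (-1) * twiceDist_sq c x y

lemma deriv_deriv_UZ_y (c2 : ℝ) (hx : x ≠ 0) :
    deriv (fun y' => deriv (fun y'' => UZ c c2 x y'') y') y
      = -(2 * (2 * y + c)) / twiceDist c x y ^ 3 := by
  have hUy : (fun y' => deriv (fun y'' => UZ c c2 x y'') y') = fun y' => (twiceDist c x y')⁻¹ :=
    funext fun y' => (hasDerivAt_UZ_y c2 hx).deriv
  rw [hUy, ((hasDerivAt_twiceDist_y hx).fun_inv (twiceDist_pos hx).ne').deriv]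
  have := twiceDist_pos (c := c) (y := y) hx
  field_simp

lemma deriv_deriv_UZ_x (c2 : ℝ) (hx : x ≠ 0) :
    deriv (fun x' => deriv (fun x'' => UZ c c2 x'' y) x') x
      = (twiceDist c x y ^ 3 + (2 * y + c) * (twiceDist c x y ^ 2 + 4 * x ^ 2))
        / (2 * x ^ 2 * twiceDist c x y ^ 3) := by
  have hUx : (fun x' => deriv (fun x'' => UZ c c2 x'' y) x') =ᶠ[nhds x]
      fun x' => -(twiceDist c x' y + (2 * y + c)) / (2 * x' * twiceDist c x' y) := by
    filter_upwards [eventually_ne_nhds hx] with x' hx'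
    exact (hasDerivAt_UZ_x c2 hx').deriv
  have hs := twiceDist_pos (c := c) (y := y) hx
  have hnum := ((hasDerivAt_twiceDist_x (c := c) (y := y) hx).add_const (2 * y + c)).fun_neg
  have hden :=
    ((hasDerivAt_id' x).const_mul 2).fun_mul (hasDerivAt_twiceDist_x (c := c) (y := y) hx)
  rw [hUx.deriv_eq, (hnum.fun_div hden (by positivity)).deriv]
  field_simp
  ring

end

theorem stmt15_general (c c2 : ℝ) (x y : ℝ) (hx : 0 < x) :
    deriv (fun x' => UZ c c2 x' y) x
      + x * deriv (fun y' => deriv (fun y'' => UZ c c2 x y'') y') y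
      + x * deriv (fun x' => deriv (fun x'' => UZ c c2 x'' y) x') x = 0 := by
  rw [(hasDerivAt_UZ_x c2 hx.ne').deriv, deriv_deriv_UZ_y c2 hx.ne', deriv_deriv_UZ_x c2 hx.ne']
  have := twiceDist_pos (c := c) (y := y) hx.ne'
  field_simp
  ring

/-- The potential `UZ` satisfies the Ernst equation `U_x + x·U_{yy} + x·U_{xx} = 0`. -/
theorem stmt15 (c c2 : ℝ) (x y : ℝ) (hx : 0 < x)
    (hdom : 0 < 4 * x ^ 2 + (2 * y + c) ^ 2) :
    deriv (fun x' => UZ c c2 x' y) x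
      + x * deriv (fun y' => deriv (fun y'' => UZ c c2 x y'') y') y
      + x * deriv (fun x' => deriv (fun x'' => UZ c c2 x'' y) x') x = 0 :=
  stmt15_general c c2 x y hx
end
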